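/- arXiv:1608.00120 — 2 statements merged into one kernel-verified Lean document; each statement's English description precedes it below -/
import Mathlib

section
/- Let γ(s), γ(s+1), …, γ(t−1) be independent nonnegative random variables, let η > 0, θ ≥ 0 and δ > 0, and let S(s,t) = η·Σ_{k=s}^{t−1} ln(1+γ(k)) denote the cumulative service process. Then E[e^{−θ·S(s,t)}] = Π_{k=s}^{t−1} E[(1+γ(k))^{−ηθ}] ≤ Π_{k=s}^{t−1} U_{δ,γ(k)}(ηθ), where for a nonnegative random variable X with cumulative distribution function F_X the quantity U_{δ,X}(θ') = inf over natural numbers N of { (1+δN)^{−θ'} + Σ_{k=1}^{N} a_{θ',δ}(k)·F_X(kδ) } with a_{θ',δ}(k) = (1+(k−1)δ)^{−θ'} − (1+kδ)^{−θ'}. -/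
/-!
Since `e^{-θ S(s,t)} = ∏ₖ (1 + γ(k))^{-ηθ}`, independence factorises the expectation. Each factor
is bounded on the grid `kδ`: as `x ↦ (1 + x)^{-θ'}` is decreasing, pointwise
`(1 + X)^{-θ'} ≤ (1 + Nδ)^{-θ'} + ∑_{k ≤ N} a(k) 𝟙{X ≤ kδ}`, the sum telescoping to
`(1 + (j - 1)δ)^{-θ'}` for the first grid point `jδ ≥ X`. Taking expectations gives the bound
for every `N`.
-/

open MeasureTheory ProbabilityTheory Finset

/-- The upper bound `U_{δ,X}(θ')` of Lemma 1 of the paper, expressed in terms of the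
c.d.f. `F` of the random variable: the infimum over the number of discretization
steps `N : ℕ` of `(1+δN)^{-θ'} + ∑_{k=1}^{N} a_{θ',δ}(k) · F(kδ)`, where
`a_{θ',δ}(k) = (1+(k-1)δ)^{-θ'} - (1+kδ)^{-θ'}`. -/
noncomputable def Ubound (F : ℝ → ℝ) (δ θ' : ℝ) : ℝ :=
  ⨅ N : ℕ,
    ((1 + δ * N) ^ (-θ') +
      ∑ k ∈ Icc 1 N,
        ((1 + ((k : ℝ) - 1) * δ) ^ (-θ') - (1 + (k : ℝ) * δ) ^ (-θ')) * F ((k : ℝ) * δ))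

theorem le_add_sum_indicator_of_antitone {α : Type*} {b : ℕ → ℝ} (hb : Antitone b)
    {A : ℕ → Set α} {y : ℝ} {a : α} (h₀ : y ≤ b 0) (hA : ∀ k, a ∉ A k → y ≤ b k) (N : ℕ) :
    y ≤ b N + ∑ k ∈ Icc 1 N, (A k).indicator (fun _ => b (k - 1) - b k) a := by
  induction N with
  | zero => simpa using h₀
  | succ N ih =>
    rw [sum_Icc_succ_top (by omega), Nat.add_sub_cancel]
    by_cases ha : a ∈ A (N + 1)
    · rw [Set.indicator_of_mem ha]
      linarith
    · have hterms : 0 ≤ ∑ k ∈ Icc 1 N, (A k).indicator (fun _ => b (k - 1) - b k) a :=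
        sum_nonneg fun k _ => Set.indicator_nonneg (fun _ _ => sub_nonneg.2 (hb (by omega))) a
      rw [Set.indicator_of_notMem ha]
      linarith [hA (N + 1) ha]

theorem integral_le_add_sum_measureReal_of_antitone {Ω : Type*} [MeasurableSpace Ω]
    {μ : Measure Ω} [IsProbabilityMeasure μ] {b : ℕ → ℝ} (hb : Antitone b)
    {A : ℕ → Set Ω} (hAmeas : ∀ k, MeasurableSet (A k)) {f : Ω → ℝ} (hf : Integrable f μ)
    (h₀ : ∀ ω, f ω ≤ b 0) (hA : ∀ k ω, ω ∉ A k → f ω ≤ b k) (N : ℕ) :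
    ∫ ω, f ω ∂μ ≤ b N + ∑ k ∈ Icc 1 N, (b (k - 1) - b k) * μ.real (A k) := by
  have hind : ∀ k ∈ Icc 1 N, Integrable ((A k).indicator fun _ => b (k - 1) - b k) μ :=
    fun k _ => (integrable_const _).indicator (hAmeas k)
  calc ∫ ω, f ω ∂μ
      ≤ ∫ ω, (b N + ∑ k ∈ Icc 1 N, (A k).indicator (fun _ => b (k - 1) - b k) ω) ∂μ :=
        integral_mono hf ((integrable_const _).add (integrable_finsetSum _ hind))
          fun ω => le_add_sum_indicator_of_antitone hb (h₀ ω) (fun k => hA k ω) N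
    _ = b N + ∑ k ∈ Icc 1 N, (b (k - 1) - b k) * μ.real (A k) := by
        rw [integral_add (integrable_const _) (integrable_finsetSum _ hind),
          integral_finsetSum _ hind]
        simp [integral_indicator_const _ (hAmeas _), mul_comm]

theorem integral_one_add_rpow_neg_le_Ubound {Ω : Type*} [MeasureSpace Ω]
    [IsProbabilityMeasure (ℙ : Measure Ω)] {X : Ω → ℝ} (hX : Measurable X)
    (hX₀ : ∀ ω, 0 ≤ X ω) {θ' δ : ℝ} (hθ' : 0 ≤ θ') (hδ : 0 < δ) :
    ∫ ω, (1 + X ω) ^ (-θ') ∂ℙ ≤ Ubound (fun x => (ℙ {ω | X ω ≤ x}).toReal) δ θ' := by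
  have hanti : ∀ {u v : ℝ}, 0 ≤ u → u ≤ v → (1 + v) ^ (-θ') ≤ (1 + u) ^ (-θ') :=
    fun hu huv => Real.rpow_le_rpow_of_nonpos (by linarith) (by linarith) (by linarith)
  have hb : Antitone fun k : ℕ => (1 + k * δ) ^ (-θ') :=
    fun i j hij => hanti (by positivity) (by gcongr)
  have hle_one : ∀ ω, (1 + X ω) ^ (-θ') ≤ 1 := fun ω =>
    Real.rpow_le_one_of_one_le_of_nonpos (by linarith [hX₀ ω]) (by linarith)
  have hf : Integrable (fun ω => (1 + X ω) ^ (-θ')) ℙ := by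
    refine .of_bound ((measurable_const.add hX).pow_const _).aestronglyMeasurable 1
      (ae_of_all _ fun ω => ?_)
    rw [Real.norm_of_nonneg (Real.rpow_nonneg (by linarith [hX₀ ω]) _)]
    exact hle_one ω
  refine le_ciInf fun N => ?_
  refine (integral_le_add_sum_measureReal_of_antitone hb (A := fun k => {ω | X ω ≤ k * δ})
    (fun k => hX measurableSet_Iic) hf (fun ω => by simpa using hle_one ω)
    (fun k ω hω => hanti (by positivity) (not_le.1 hω).le) N).trans_eq ?_
  congr 1
  · rw [mul_comm]
  · refine sum_congr rfl fun k hk => ?_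
    rw [Nat.cast_sub (mem_Icc.1 hk).1, Nat.cast_one]
    rfl

theorem ProbabilityTheory.iIndepFun.integral_exp_mul_sum {Ω ι : Type*} [MeasurableSpace Ω]
    {μ : Measure Ω} {s : Finset ι} {X : ι → Ω → ℝ} (h : iIndepFun (fun i : s => X i) μ)
    (hX : ∀ i ∈ s, Measurable (X i)) (t : ℝ) :
    ∫ ω, Real.exp (t * ∑ i ∈ s, X i ω) ∂μ = ∏ i ∈ s, ∫ ω, Real.exp (t * X i ω) ∂μ := by
  have := h.mgf_sum (fun i => hX i i.2) univ (t := t)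
  simp only [mgf, Finset.sum_apply] at this
  rw [← prod_coe_sort, ← this]
  simp [← sum_coe_sort s]

theorem service_MGF_eq_prod_and_le_Ubound_general
    {Ω : Type*} [MeasureSpace Ω] [IsProbabilityMeasure (ℙ : Measure Ω)]
    (γ : ℕ → Ω → ℝ) (hmeas : ∀ k, Measurable (γ k)) (hnonneg : ∀ k ω, 0 ≤ γ k ω)
    (s t : ℕ)
    (hindep : iIndepFun
      (fun k : (Ico s t : Finset ℕ) => γ (k : ℕ)) ℙ)
    (η θ δ : ℝ) (hη : 0 < η) (hθ : 0 ≤ θ) (hδ : 0 < δ) :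
    (∫ ω : Ω, Real.exp (-θ * (η * ∑ k ∈ Ico s t, Real.log (1 + γ k ω))) ∂ℙ =
        ∏ k ∈ Ico s t, ∫ ω : Ω, (1 + γ k ω) ^ (-(η * θ)) ∂ℙ) ∧
      (∏ k ∈ Ico s t, ∫ ω : Ω, (1 + γ k ω) ^ (-(η * θ)) ∂ℙ) ≤
        ∏ k ∈ Ico s t, Ubound (fun x => (ℙ {ω : Ω | γ k ω ≤ x}).toReal) δ (η * θ) := by
  have hpos : ∀ k ω, 0 < 1 + γ k ω := fun k ω => by linarith [hnonneg k ω]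
  constructor
  · have hlog : iIndepFun (fun k : (Ico s t : Finset ℕ) => fun ω => Real.log (1 + γ k ω)) ℙ :=
      hindep.comp _ fun _ => (measurable_const.add measurable_id).log
    calc ∫ ω, Real.exp (-θ * (η * ∑ k ∈ Ico s t, Real.log (1 + γ k ω))) ∂ℙ
        = ∫ ω, Real.exp (-(η * θ) * ∑ k ∈ Ico s t, Real.log (1 + γ k ω)) ∂ℙ := by ring_nf
      _ = ∏ k ∈ Ico s t, ∫ ω, Real.exp (-(η * θ) * Real.log (1 + γ k ω)) ∂ℙ :=
        hlog.integral_exp_mul_sum (fun k _ => (measurable_const.add (hmeas k)).log) _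
      _ = ∏ k ∈ Ico s t, ∫ ω, (1 + γ k ω) ^ (-(η * θ)) ∂ℙ := by
        simp_rw [Real.rpow_def_of_pos (hpos _ _), mul_comm]
  · exact prod_le_prod (fun k _ => integral_nonneg fun ω => Real.rpow_nonneg (hpos k ω).le _)
      fun k _ => integral_one_add_rpow_neg_le_Ubound (hmeas k) (hnonneg k) (by positivity) hδ

/-- Theorem 1 of the paper, first part. For independent nonnegative
SNRs `γ(s), …, γ(t-1)`, `η > 0`, `θ ≥ 0`, `δ > 0`, and the cumulative service process
`S(s,t) = η ∑_{k=s}^{t-1} ln(1+γ(k))`, we have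
`E[e^{-θ S(s,t)}] = ∏_{k=s}^{t-1} E[(1+γ(k))^{-ηθ}] ≤ ∏_{k=s}^{t-1} U_{δ,γ(k)}(ηθ)`. -/
theorem service_MGF_eq_prod_and_le_Ubound
    {Ω : Type*} [MeasureSpace Ω] [IsProbabilityMeasure (ℙ : Measure Ω)]
    (γ : ℕ → Ω → ℝ) (hmeas : ∀ k, Measurable (γ k)) (hnonneg : ∀ k ω, 0 ≤ γ k ω)
    (s t : ℕ) (hst : s ≤ t)
    (hindep : iIndepFun
      (fun k : (Ico s t : Finset ℕ) => γ (k : ℕ)) ℙ)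
    (η θ δ : ℝ) (hη : 0 < η) (hθ : 0 ≤ θ) (hδ : 0 < δ) :
    (∫ ω : Ω, Real.exp (-θ * (η * ∑ k ∈ Ico s t, Real.log (1 + γ k ω))) ∂ℙ =
        ∏ k ∈ Ico s t, ∫ ω : Ω, (1 + γ k ω) ^ (-(η * θ)) ∂ℙ) ∧
      (∏ k ∈ Ico s t, ∫ ω : Ω, (1 + γ k ω) ^ (-(η * θ)) ∂ℙ) ≤
        ∏ k ∈ Ico s t, Ubound (fun x => (ℙ {ω : Ω | γ k ω ≤ x}).toReal) δ (η * θ) :=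
  service_MGF_eq_prod_and_le_Ubound_general γ hmeas hnonneg s t hindep η θ δ hη hθ hδ
end

section
/- Let γ(s), γ(s+1), …, γ(t−1) be independent and identically distributed nonnegative random variables with common distribution that of a nonnegative random variable γ, let η > 0, θ ≥ 0 and δ > 0, and let S(s,t) = η·Σ_{k=s}^{t−1} ln(1+γ(k)). Then E[e^{−θ·S(s,t)}] ≤ (q(θ))^{t−s}, where q(θ) = U_{δ,γ}(ηθ). -/
open MeasureTheory ProbabilityTheory Finset

/-!
Writing `X k = log (1 + γ k)`, the left side is the moment generating function of `∑ X k` at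
`-ηθ`. Independence factors it and identical distribution makes every factor
`E[(1 + γ₀)^(-ηθ)]`. For each `N`, `(1 + x)^(-ηθ)` lies below the step function
`(1 + δN)^(-ηθ) + ∑_{k ≤ N} a(k) 1{x ≤ kδ}`, whose expectation is the `N`-th term in the
infimum defining `U`.
-/

/-- If `x ≤ jδ` first happens at `j ≤ N`, the right side telescopes to `g ((j - 1)δ)`;
otherwise it is `g (Nδ)`. -/
theorem le_add_sum_sub_mul_indicator_Iic {g : ℝ → ℝ} {δ x y : ℝ} (hδ : 0 ≤ δ) (hx : 0 ≤ x)
    (hy : ∀ k : ℕ, k * δ ≤ x → y ≤ g (k * δ)) (N : ℕ) :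
    y ≤ g (δ * N) + ∑ k ∈ Icc 1 N,
      (g (((k : ℝ) - 1) * δ) - g (k * δ)) * (Set.Iic ((k : ℝ) * δ)).indicator 1 x := by
  induction N with
  | zero => simpa using hy 0 (by simpa using hx)
  | succ N ih =>
    rw [sum_Icc_succ_top (by omega), Nat.cast_succ, add_sub_cancel_right, mul_comm δ]
    by_cases hxN : x ≤ (N + 1) * δ
    · rw [Set.indicator_of_mem (Set.mem_Iic.2 hxN), Pi.one_apply, mul_one, mul_comm δ] at *
      linarith
    · have hzero : ∀ k ∈ Icc 1 (N + 1), (Set.Iic ((k : ℝ) * δ)).indicator (1 : ℝ → ℝ) x = 0 := by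
        intro k hk
        refine Set.indicator_of_notMem (fun hxk => hxN (hxk.trans ?_)) _
        gcongr
        exact_mod_cast (mem_Icc.1 hk).2
      have hlast := hzero (N + 1) (by simp)
      push_cast at hlast
      rw [sum_eq_zero fun k hk => by rw [hzero k (Icc_subset_Icc_right N.le_succ hk), mul_zero],
        hlast, mul_zero, add_zero, add_zero]
      exact_mod_cast hy (N + 1) (by push_cast; linarith)

section

variable {Ω : Type*} {m : MeasurableSpace Ω} {μ : Measure Ω} [IsProbabilityMeasure μ]
  {X : Ω → ℝ} {θ δ : ℝ}

theorem integral_one_add_rpow_neg_le (hX : Measurable X) (hX₀ : ∀ ω, 0 ≤ X ω) (hθ : 0 ≤ θ)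
    (hδ : 0 ≤ δ) (N : ℕ) :
    ∫ ω, (1 + X ω) ^ (-θ) ∂μ ≤ (1 + δ * N) ^ (-θ) + ∑ k ∈ Icc 1 N,
      ((1 + ((k : ℝ) - 1) * δ) ^ (-θ) - (1 + (k : ℝ) * δ) ^ (-θ)) * μ.real {ω | X ω ≤ k * δ} := by
  have hind : ∀ c : ℝ, Integrable (fun ω => (Set.Iic c).indicator (1 : ℝ → ℝ) (X ω)) μ :=
    fun c => (integrable_const (1 : ℝ)).indicator (hX measurableSet_Iic)
  calc ∫ ω, (1 + X ω) ^ (-θ) ∂μ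
      ≤ ∫ ω, ((1 + δ * N) ^ (-θ) + ∑ k ∈ Icc 1 N,
          ((1 + ((k : ℝ) - 1) * δ) ^ (-θ) - (1 + (k : ℝ) * δ) ^ (-θ))
            * (Set.Iic ((k : ℝ) * δ)).indicator 1 (X ω)) ∂μ := by
        refine integral_mono_of_nonneg
          (ae_of_all _ fun ω => Real.rpow_nonneg (by linarith [hX₀ ω]) _)
          ((integrable_const _).add (integrable_finsetSum _ fun k _ => (hind _).const_mul _))
          (ae_of_all _ fun ω => ?_)
        refine le_add_sum_sub_mul_indicator_Iic (g := fun u => (1 + u) ^ (-θ)) hδ (hX₀ ω)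
          (fun k hk => Real.rpow_le_rpow_of_nonpos (by positivity) (by linarith) (by linarith)) N
    _ = _ := by
        rw [integral_add (integrable_const _)
          (integrable_finsetSum _ fun k _ => (hind _).const_mul _),
          integral_const, probReal_univ, one_smul,
          integral_finsetSum _ fun k _ => (hind _).const_mul _]
        congr 1
        refine sum_congr rfl fun k _ => ?_
        rw [integral_const_mul]
        congr 1
        exact integral_indicator_one (hX measurableSet_Iic)

theorem mgf_log_one_add_neg_le_Ubound (hX : Measurable X) (hX₀ : ∀ ω, 0 ≤ X ω) (hθ : 0 ≤ θ)
    (hδ : 0 ≤ δ) :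
    mgf (fun ω => Real.log (1 + X ω)) μ (-θ) ≤ Ubound (fun x => μ.real {ω | X ω ≤ x}) δ θ := by
  have hrpow : ∀ ω, Real.exp (-θ * Real.log (1 + X ω)) = (1 + X ω) ^ (-θ) := fun ω => by
    rw [Real.rpow_def_of_pos (by linarith [hX₀ ω]), mul_comm]
  simp only [mgf, hrpow]
  exact le_ciInf (integral_one_add_rpow_neg_le hX hX₀ hθ hδ)

end

theorem service_MGF_le_pow_iid_general
    {Ω : Type*} [MeasureSpace Ω] [IsProbabilityMeasure (ℙ : Measure Ω)]
    (γ : ℕ → Ω → ℝ)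
    (γ₀ : Ω → ℝ) (hmeas₀ : Measurable γ₀) (hnonneg₀ : ∀ ω, 0 ≤ γ₀ ω)
    (s t : ℕ)
    (hindep : iIndepFun
      (fun k : (Ico s t : Finset ℕ) => γ (k : ℕ)) ℙ)
    (hident : ∀ k ∈ Ico s t, IdentDistrib (γ k) γ₀ ℙ ℙ)
    (η θ δ : ℝ) (hη : 0 < η) (hθ : 0 ≤ θ) (hδ : 0 < δ) :
    ∫ ω : Ω, Real.exp (-θ * (η * ∑ k ∈ Ico s t, Real.log (1 + γ k ω))) ∂ℙ ≤
      (Ubound (fun x => (ℙ {ω : Ω | γ₀ ω ≤ x}).toReal) δ (η * θ)) ^ (t - s) := by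
  have hlog : Measurable fun x : ℝ => Real.log (1 + x) := by fun_prop
  set L : ↥(Ico s t) → Ω → ℝ := fun k ω => Real.log (1 + γ k ω)
  have hL_indep : iIndepFun L ℙ := hindep.comp _ fun _ => hlog
  have hL_meas : ∀ k, AEMeasurable (L k) ℙ := fun k =>
    hlog.comp_aemeasurable (hident k k.2).aemeasurable_fst
  have hL_ident : ∀ k, IdentDistrib (L k) (fun ω => Real.log (1 + γ₀ ω)) ℙ ℙ := fun k =>
    (hident k k.2).comp hlog
  calc _ = mgf (∑ k, L k) ℙ (-(η * θ)) := by
        refine integral_congr_ae (ae_of_all _ fun ω => ?_)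
        simp only [Finset.sum_apply, L,
          Finset.sum_coe_sort (Ico s t) fun k => Real.log (1 + γ k ω)]
        ring_nf
    _ = mgf (fun ω => Real.log (1 + γ₀ ω)) ℙ (-(η * θ)) ^ (t - s) := by
        rw [hL_indep.mgf_sum₀ hL_meas, prod_eq_pow_card fun k _ =>
          mgf_congr_of_identDistrib _ _ (hL_ident k) _, card_univ, Fintype.card_coe, Nat.card_Ico]
    _ ≤ _ := pow_le_pow_left₀ mgf_nonneg (mgf_log_one_add_neg_le_Ubound hmeas₀ hnonneg₀
          (mul_nonneg hη.le hθ) hδ.le) _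

/-- Theorem 1 of the paper, second part: the i.i.d. case. For i.i.d.
nonnegative SNRs `γ(s), …, γ(t-1)` with common distribution that of `γ₀`, `η > 0`,
`θ ≥ 0`, `δ > 0`, and `S(s,t) = η ∑_{k=s}^{t-1} ln(1+γ(k))`,
`E[e^{-θ S(s,t)}] ≤ (q(θ))^{t-s}`, where `q(θ) = U_{δ,γ₀}(ηθ)`. -/
theorem service_MGF_le_pow_iid
    {Ω : Type*} [MeasureSpace Ω] [IsProbabilityMeasure (ℙ : Measure Ω)]
    (γ : ℕ → Ω → ℝ) (hmeas : ∀ k, Measurable (γ k)) (hnonneg : ∀ k ω, 0 ≤ γ k ω)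
    (γ₀ : Ω → ℝ) (hmeas₀ : Measurable γ₀) (hnonneg₀ : ∀ ω, 0 ≤ γ₀ ω)
    (s t : ℕ) (hst : s ≤ t)
    (hindep : iIndepFun
      (fun k : (Ico s t : Finset ℕ) => γ (k : ℕ)) ℙ)
    (hident : ∀ k ∈ Ico s t, IdentDistrib (γ k) γ₀ ℙ ℙ)
    (η θ δ : ℝ) (hη : 0 < η) (hθ : 0 ≤ θ) (hδ : 0 < δ) :
    ∫ ω : Ω, Real.exp (-θ * (η * ∑ k ∈ Ico s t, Real.log (1 + γ k ω))) ∂ℙ ≤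
      (Ubound (fun x => (ℙ {ω : Ω | γ₀ ω ≤ x}).toReal) δ (η * θ)) ^ (t - s) :=
  service_MGF_le_pow_iid_general γ γ₀ hmeas₀ hnonneg₀ s t hindep hident η θ δ hη hθ hδ
end
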